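/- arXiv:math/0207215 — 5 statements merged into one kernel-verified Lean document; each statement's English description precedes it below -/
import Mathlib

section
/- On the dual of g₄,₁ identified with ℝ⁴, the coadjoint orbit through a point μ = (μ₁,μ₂,μ₃,μ₄) with μ₁ ≠ 0 equals the set {(μ₁, s, (2μ₁μ₃ − μ₂² + s²)/(2μ₁), μ₁ t) : (s,t) ∈ ℝ²}. -/
/-- Coadjoint action of the one-parameter subgroup `exp(a X₄)` of the connected
simply connected group `G` of `g₄,₁` (brackets `[X₄,X₃]=X₂`, `[X₄,X₂]=X₁`) on
the dual, in the coordinates `x₁,…,x₄ = x 0,…,x 3`. -/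
noncomputable def Phi4 (a : ℝ) (x : Fin 4 → ℝ) : Fin 4 → ℝ :=
  ![x 0, x 1 - a * x 0, x 2 - a * x 1 + a ^ 2 / 2 * x 0, x 3]

/-- Coadjoint action of `exp(b X₃)`. -/
noncomputable def Phi3 (b : ℝ) (x : Fin 4 → ℝ) : Fin 4 → ℝ :=
  ![x 0, x 1, x 2, x 3 + b * x 1]

/-- Coadjoint action of `exp(c X₂)`. -/
noncomputable def Phi2 (c : ℝ) (x : Fin 4 → ℝ) : Fin 4 → ℝ :=
  ![x 0, x 1, x 2, x 3 + c * x 0]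

/-- The coadjoint orbit of `μ`: the smallest subset of `g₄,₁*` containing `μ`
and stable under the coadjoint flows of the basis one-parameter subgroups
(these generate `G`, and `X₁` is central so it acts trivially). -/
def coadOrbit (μ : Fin 4 → ℝ) : Set (Fin 4 → ℝ) :=
  ⋂₀ {S : Set (Fin 4 → ℝ) | μ ∈ S ∧
      ∀ t : ℝ, ∀ x ∈ S, Phi4 t x ∈ S ∧ Phi3 t x ∈ S ∧ Phi2 t x ∈ S}

/-- In the dual of `g₄,₁` identified with `ℝ⁴`, the coadjoint
orbit through `μ = (μ₁,μ₂,μ₃,μ₄)` with `μ₁ ≠ 0` is the parabolic cylinder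
`{(μ₁, s, (2μ₁μ₃ − μ₂² + s²)/(2μ₁), μ₁ t) : (s,t) ∈ ℝ²}`. -/
theorem g41_orbit_generic (μ : Fin 4 → ℝ) (hμ : μ 0 ≠ 0) :
    coadOrbit μ =
      {y : Fin 4 → ℝ | ∃ s t : ℝ,
        y = ![μ 0, s, (2 * μ 0 * μ 2 - (μ 1) ^ 2 + s ^ 2) / (2 * μ 0), μ 0 * t]} := by
  apply Set.Subset.antisymm
  · -- orbit ⊆ cylinder : the cylinder is an invariant set containing μ
    intro y hy
    apply hy
    constructor
    · refine ⟨μ 1, μ 3 / μ 0, ?_⟩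
      funext i
      fin_cases i <;> (try simp) <;> (try field_simp) <;> ring
    · rintro a x ⟨s, t, rfl⟩
      refine ⟨⟨s - a * μ 0, t, ?_⟩, ⟨s, t + a * s / μ 0, ?_⟩, ⟨s, t + a, ?_⟩⟩ <;>
        · funext i
          fin_cases i <;> simp only [Phi4, Phi3, Phi2, Matrix.cons_val_zero, Matrix.cons_val_one,
            Matrix.head_cons, Matrix.cons_val_two, Matrix.tail_cons, Matrix.cons_val_three,
            Matrix.cons_val_fin_one] <;> (try field_simp) <;> ring
  · -- cylinder ⊆ orbit
    rintro y ⟨s, t, rfl⟩ S ⟨hμS, hS⟩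
    have h1 : Phi4 ((μ 1 - s) / μ 0) μ ∈ S := (hS _ μ hμS).1
    have h2 : Phi2 (t - μ 3 / μ 0) (Phi4 ((μ 1 - s) / μ 0) μ) ∈ S := (hS _ _ h1).2.2
    have heq : ![μ 0, s, (2 * μ 0 * μ 2 - (μ 1) ^ 2 + s ^ 2) / (2 * μ 0), μ 0 * t]
        = Phi2 (t - μ 3 / μ 0) (Phi4 ((μ 1 - s) / μ 0) μ) := by
      funext i
      fin_cases i <;> simp only [Phi4, Phi2, Matrix.cons_val_zero, Matrix.cons_val_one,
          Matrix.head_cons, Matrix.cons_val_two, Matrix.tail_cons, Matrix.cons_val_three,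
          Matrix.cons_val_fin_one] <;> (try field_simp) <;> ring
    rw [heq]
    exact h2
end

section
/- The quotient of Ω = {x ∈ ℝ⁴ : x₁² + x₂² ≠ 0} by the coadjoint action of the group of g₄,₁ is not Hausdorff: for every pair of open saturated neighborhoods U of the orbit of (0,1,0,0) and V of the orbit of (0,−1,0,0), the images of U and V in the orbit space intersect. -/
/-- The union `Ω` of the maximal (2-)dimensional coadjoint orbits of `g₄,₁`. -/
def Omega : Set (Fin 4 → ℝ) := {x | (x 0) ^ 2 + (x 1) ^ 2 ≠ 0}

/-- The quotient of `Ω` by the coadjoint action is not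
Hausdorff: any two open saturated neighborhoods `U` of the orbit of
`(0,1,0,0)` and `V` of the orbit of `(0,−1,0,0)` have intersecting images in
the orbit space — since `U` and `V` are saturated, this means `U ∩ V ≠ ∅`. -/
theorem g41_orbit_space_not_hausdorff (U V : Set (Fin 4 → ℝ))
    (hUo : IsOpen U) (hVo : IsOpen V) (hUΩ : U ⊆ Omega) (hVΩ : V ⊆ Omega)
    (hUsat : ∀ x ∈ U, coadOrbit x ⊆ U) (hVsat : ∀ x ∈ V, coadOrbit x ⊆ V)
    (hU : (![0, 1, 0, 0] : Fin 4 → ℝ) ∈ U)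
    (hV : (![0, -1, 0, 0] : Fin 4 → ℝ) ∈ V) :
    (U ∩ V).Nonempty := by
  -- `Phi4 a x` is always in the orbit of `x`.
  have horb : ∀ (a : ℝ) (x : Fin 4 → ℝ), Phi4 a x ∈ coadOrbit x := by
    intro a x S hS
    exact (hS.2 a x hS.1).1
  -- continuity of ε ↦ (ε, c, 0, 0)
  have hcont : ∀ c : ℝ, Continuous (fun ε : ℝ => (![ε, c, 0, 0] : Fin 4 → ℝ)) := by
    intro c
    apply continuous_pi
    intro i
    fin_cases i <;> simp <;> fun_prop
  have hUnhds : (fun ε : ℝ => (![ε, (1:ℝ), 0, 0] : Fin 4 → ℝ)) ⁻¹' U ∈ nhds (0:ℝ) := by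
    refine IsOpen.mem_nhds ((hcont 1).isOpen_preimage U hUo) ?_
    simpa using hU
  have hVnhds : (fun ε : ℝ => (![ε, (-1:ℝ), 0, 0] : Fin 4 → ℝ)) ⁻¹' V ∈ nhds (0:ℝ) := by
    refine IsOpen.mem_nhds ((hcont (-1)).isOpen_preimage V hVo) ?_
    simpa using hV
  obtain ⟨δ, hδpos, hδ⟩ := Metric.mem_nhds_iff.1 (Filter.inter_mem hUnhds hVnhds)
  set ε : ℝ := δ / 2 with hε
  have hεpos : 0 < ε := by positivity
  have hεne : ε ≠ 0 := ne_of_gt hεpos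
  have hmem : ε ∈ Metric.ball (0:ℝ) δ := by
    simp only [Metric.mem_ball, Real.dist_eq, sub_zero]
    rw [abs_of_pos hεpos]
    linarith
  have hεUV := hδ hmem
  have hyU : (![ε, (1:ℝ), 0, 0] : Fin 4 → ℝ) ∈ U := hεUV.1
  have hzV : (![ε, (-1:ℝ), 0, 0] : Fin 4 → ℝ) ∈ V := hεUV.2
  have hkey : (![ε, (-1:ℝ), 0, 0] : Fin 4 → ℝ) = Phi4 (2 / ε) (![ε, (1:ℝ), 0, 0]) := by
    funext i
    fin_cases i <;> simp [Phi4] <;> field_simp <;> ring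
  have hzU : (![ε, (-1:ℝ), 0, 0] : Fin 4 → ℝ) ∈ U := by
    rw [hkey]
    exact hUsat _ hyU (horb _ _)
  exact ⟨_, hzU, hzV⟩
end

section
/- If α₁ < α₂ < ... < α_p are reals greater than 1/2 and λ₁,...,λ_p are reals such that the function x₁ ↦ ∫₀¹ Σᵢ λᵢ ds/((x₁²+s²)^{αᵢ} x₁) has a finite limit as x₁ → 0⁺, then all λᵢ = 0. -/
/-!
Let `K_a(x) = ∫₀¹ ds / ((x² + s²)^a x)`. Splitting the integral at `s = x` gives
`2^{-a} x^{-2a} ≤ K_a(x) ≤ (2a / (2a - 1)) x^{-2a}` for `0 < x ≤ 1`, so `K_a ≍ x^{-2a}` as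
`x → 0⁺`. Hence the `K_{αᵢ}` form an asymptotic scale: each one is unbounded and is negligible
against the next. In a bounded combination `∑ λᵢ K_{αᵢ}`, the term of largest index with
`λᵢ ≠ 0` would dominate both the other terms and the bounded sum, which is impossible.
-/

open Real Filter Set MeasureTheory Asymptotics Topology

lemma eq_zero_of_sum_isBigO_one {α ι : Type*} [Fintype ι] [LinearOrder ι]
    {l : Filter α} [l.NeBot] {f : ι → α → ℝ} (hf : ∀ i j, i < j → f i =o[l] f j)
    (hone : ∀ i, (fun _ => (1 : ℝ)) =o[l] f i) {c : ι → ℝ}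
    (hc : (fun x => ∑ i, c i * f i x) =O[l] fun _ => (1 : ℝ)) : ∀ i, c i = 0 := by
  classical
  by_contra! ⟨i₀, hi₀⟩
  have hT : (Finset.univ.filter fun i => c i ≠ 0).Nonempty := ⟨i₀, by simpa using hi₀⟩
  set j := (Finset.univ.filter fun i => c i ≠ 0).max' hT
  have hj : c j ≠ 0 := by simpa using Finset.max'_mem _ hT
  have hrest : (fun x => ∑ i ∈ Finset.univ.erase j, c i * f i x) =o[l] f j := by
    refine IsLittleO.fun_sum fun i hi => ?_
    by_cases hci : c i = 0
    · simp [hci]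
    · have hij : i < j := lt_of_le_of_ne (Finset.le_max' _ i (by simpa using hci))
        (Finset.ne_of_mem_erase hi)
      exact (hf i j hij).const_mul_left (c i)
  have hlead : (fun x => c j * f j x) =o[l] f j := by
    refine ((hc.trans_isLittleO (hone j)).sub hrest).congr_left fun x => ?_
    rw [← Finset.add_sum_erase _ _ (Finset.mem_univ j)]
    ring
  have hnz : ∃ᶠ x in l, f j x ≠ 0 :=
    (((isLittleO_one_left_iff ℝ).mp (hone j)).eventually_ge_atTop 1).frequently.mono
      fun x hx h0 => by norm_num [h0] at hx
  exact isLittleO_irrefl hnz ((isLittleO_const_mul_left_iff hj).mp hlead)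

lemma isLittleO_rpow_rpow_nhdsGT_zero {a b : ℝ} (hab : a < b) :
    (fun x : ℝ => x ^ b) =o[𝓝[>] 0] fun x => x ^ a := by
  have hlim : Tendsto (fun x : ℝ => x ^ (b - a)) (𝓝[>] 0) (𝓝 0) := by
    have := (continuousAt_rpow_const 0 (b - a) (Or.inr (sub_nonneg.2 hab.le))).tendsto
    rw [zero_rpow (sub_ne_zero.2 hab.ne')] at this
    exact this.mono_left nhdsWithin_le_nhds
  refine (((isLittleO_one_iff ℝ).2 hlim).mul_isBigO (isBigO_refl (fun x : ℝ => x ^ a) _)).congr'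
    ?_ (by simp)
  filter_upwards [self_mem_nhdsWithin] with x hx
  rw [← rpow_add hx, sub_add_cancel]

lemma sq_rpow_eq_rpow_two_mul {x : ℝ} (hx : 0 ≤ x) (a : ℝ) : (x ^ 2) ^ a = x ^ (2 * a) := by
  rw [← rpow_natCast_mul hx]
  norm_num

section

variable {a x : ℝ}

lemma continuous_rpow_sq_add_sq (hx : x ≠ 0) : Continuous fun s : ℝ => (x ^ 2 + s ^ 2) ^ a :=
  (by fun_prop : Continuous fun s : ℝ => x ^ 2 + s ^ 2).rpow_const fun s => Or.inl (by positivity)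

lemma intervalIntegrable_inv_rpow_sq_add_sq_mul (hx : x ≠ 0) (u v : ℝ) :
    IntervalIntegrable (fun s : ℝ => ((x ^ 2 + s ^ 2) ^ a * x)⁻¹) volume u v :=
  ((continuous_rpow_sq_add_sq hx).mul continuous_const).inv₀
    (fun s => mul_ne_zero (by positivity) hx) |>.intervalIntegrable u v

noncomputable def kernelIntegral (a x : ℝ) : ℝ := ∫ s in (0 : ℝ)..1, ((x ^ 2 + s ^ 2) ^ a * x)⁻¹

lemma kernelIntegral_eq_add (hx : x ≠ 0) : kernelIntegral a x =
    (∫ s in (0 : ℝ)..x, ((x ^ 2 + s ^ 2) ^ a * x)⁻¹) + ∫ s in x..1, ((x ^ 2 + s ^ 2) ^ a * x)⁻¹ :=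
  (intervalIntegral.integral_add_adjacent_intervals
    (intervalIntegrable_inv_rpow_sq_add_sq_mul hx 0 x)
    (intervalIntegrable_inv_rpow_sq_add_sq_mul hx x 1)).symm

lemma two_rpow_neg_mul_le_kernelIntegral (ha : 0 ≤ a) (hx : 0 < x) (hx1 : x ≤ 1) :
    2 ^ (-a) * x ^ (-(2 * a)) ≤ kernelIntegral a x := by
  calc 2 ^ (-a) * x ^ (-(2 * a)) = ∫ s in (0 : ℝ)..x, ((2 * x ^ 2) ^ a * x)⁻¹ := by
        rw [intervalIntegral.integral_const, sub_zero, smul_eq_mul,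
          mul_rpow zero_le_two (sq_nonneg x), sq_rpow_eq_rpow_two_mul hx.le, rpow_neg zero_le_two,
          rpow_neg hx.le]
        field_simp
    _ ≤ ∫ s in (0 : ℝ)..x, ((x ^ 2 + s ^ 2) ^ a * x)⁻¹ := by
        refine intervalIntegral.integral_mono_on hx.le intervalIntegrable_const
          (intervalIntegrable_inv_rpow_sq_add_sq_mul hx.ne' 0 x) fun s hs => ?_
        have : x ^ 2 + s ^ 2 ≤ 2 * x ^ 2 := by nlinarith [hs.1, hs.2]
        gcongr
    _ ≤ kernelIntegral a x := by
        rw [kernelIntegral_eq_add hx.ne']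
        exact le_add_of_nonneg_right
          (intervalIntegral.integral_nonneg hx1 fun s _ => by positivity)

lemma integral_rpow_neg_two_mul_le (ha : 1 / 2 < a) (hx : 0 < x) :
    ∫ s in x..1, s ^ (-(2 * a)) ≤ x ^ (1 - 2 * a) / (2 * a - 1) := by
  rw [integral_rpow (Or.inr ⟨by intro h; linarith, notMem_uIcc_of_lt hx one_pos⟩), one_rpow,
    show -(2 * a) + 1 = -(2 * a - 1) by ring, div_neg, ← neg_div, neg_sub,
    show 1 - 2 * a = -(2 * a - 1) by ring]
  gcongr <;> linarith

lemma kernelIntegral_le (ha : 1 / 2 < a) (hx : 0 < x) (hx1 : x ≤ 1) :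
    kernelIntegral a x ≤ 2 * a / (2 * a - 1) * x ^ (-(2 * a)) := by
  have hhead : ∫ s in (0 : ℝ)..x, ((x ^ 2 + s ^ 2) ^ a * x)⁻¹ ≤ x ^ (-(2 * a)) := by
    calc ∫ s in (0 : ℝ)..x, ((x ^ 2 + s ^ 2) ^ a * x)⁻¹
        ≤ ∫ s in (0 : ℝ)..x, ((x ^ 2) ^ a * x)⁻¹ := by
          refine intervalIntegral.integral_mono_on hx.le
            (intervalIntegrable_inv_rpow_sq_add_sq_mul hx.ne' 0 x) intervalIntegrable_const
            fun s _ => ?_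
          gcongr
          nlinarith
      _ = x ^ (-(2 * a)) := by
          rw [intervalIntegral.integral_const, sub_zero, smul_eq_mul, sq_rpow_eq_rpow_two_mul hx.le,
            rpow_neg hx.le]
          field_simp
  have htail : ∫ s in x..1, ((x ^ 2 + s ^ 2) ^ a * x)⁻¹ ≤ x ^ (-(2 * a)) / (2 * a - 1) := by
    calc ∫ s in x..1, ((x ^ 2 + s ^ 2) ^ a * x)⁻¹
        ≤ ∫ s in x..1, s ^ (-(2 * a)) * x⁻¹ := by
          refine intervalIntegral.integral_mono_on hx1
            (intervalIntegrable_inv_rpow_sq_add_sq_mul hx.ne' x 1)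
            ((intervalIntegral.intervalIntegrable_rpow
              (Or.inr (notMem_uIcc_of_lt hx one_pos))).mul_const _) fun s hs => ?_
          have hs0 : 0 < s := hx.trans_le hs.1
          rw [mul_inv, rpow_neg hs0.le, ← sq_rpow_eq_rpow_two_mul hs0.le]
          gcongr
          nlinarith
      _ ≤ x ^ (1 - 2 * a) / (2 * a - 1) * x⁻¹ := by
          rw [intervalIntegral.integral_mul_const]
          gcongr
          exact integral_rpow_neg_two_mul_le ha hx
      _ = x ^ (-(2 * a)) / (2 * a - 1) := by
          rw [sub_eq_neg_add, rpow_add hx, rpow_one]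
          field_simp
  have h2a : 2 * a - 1 ≠ 0 := by linarith
  calc kernelIntegral a x ≤ x ^ (-(2 * a)) + x ^ (-(2 * a)) / (2 * a - 1) := by
        rw [kernelIntegral_eq_add hx.ne']
        exact add_le_add hhead htail
    _ = 2 * a / (2 * a - 1) * x ^ (-(2 * a)) := by
        field_simp
        ring

lemma kernelIntegral_isTheta (ha : 1 / 2 < a) :
    kernelIntegral a =Θ[𝓝[>] 0] fun x => x ^ (-(2 * a)) := by
  have hbounds : ∀ᶠ x in 𝓝[>] (0 : ℝ), 0 < x ^ (-(2 * a)) ∧ 0 ≤ kernelIntegral a x ∧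
      2 ^ (-a) * x ^ (-(2 * a)) ≤ kernelIntegral a x ∧
      kernelIntegral a x ≤ 2 * a / (2 * a - 1) * x ^ (-(2 * a)) := by
    filter_upwards [Ioo_mem_nhdsGT one_pos] with x hx
    have hpos : 0 < x ^ (-(2 * a)) := rpow_pos_of_pos hx.1 _
    have hlow := two_rpow_neg_mul_le_kernelIntegral (a := a) (by linarith) hx.1 hx.2.le
    exact ⟨hpos, (by positivity : (0 : ℝ) ≤ 2 ^ (-a) * x ^ (-(2 * a))).trans hlow,
      hlow, kernelIntegral_le ha hx.1 hx.2.le⟩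
  constructor
  · refine IsBigO.of_bound (2 * a / (2 * a - 1)) (hbounds.mono fun x ⟨hpos, hK, _, hup⟩ => ?_)
    rwa [norm_of_nonneg hK, norm_of_nonneg hpos.le]
  · refine IsBigO.of_bound (2 ^ a) (hbounds.mono fun x ⟨hpos, hK, hlow, _⟩ => ?_)
    rw [norm_of_nonneg hpos.le, norm_of_nonneg hK]
    rw [rpow_neg zero_le_two] at hlow
    exact (inv_mul_le_iff₀ (by positivity)).mp hlow

lemma integral_sum_div_eq_sum_mul_kernelIntegral {ι : Type*} [Fintype ι] (c a : ι → ℝ)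
    (hx : x ≠ 0) :
    ∫ s in (0 : ℝ)..1, ∑ i, c i / ((x ^ 2 + s ^ 2) ^ (a i) * x) =
      ∑ i, c i * kernelIntegral (a i) x := by
  simp_rw [div_eq_mul_inv]
  rw [intervalIntegral.integral_finsetSum fun i _ =>
    (intervalIntegrable_inv_rpow_sq_add_sq_mul hx 0 1).const_mul (c i)]
  simp_rw [intervalIntegral.integral_const_mul, kernelIntegral]

end

/-- If `α₁ < … < α_p` are reals greater than `1/2` and
`λ₁,…,λ_p` are reals such that
`x₁ ↦ ∫₀¹ Σᵢ λᵢ ds/((x₁²+s²)^{αᵢ} x₁)` has a finite limit as `x₁ → 0⁺`,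
then all `λᵢ = 0`. -/
theorem rpow_classes_linearly_independent (p : ℕ) (α : Fin p → ℝ)
    (hmono : StrictMono α) (hα : ∀ i, 1 / 2 < α i) (lam : Fin p → ℝ)
    (h : ∃ L : ℝ, Filter.Tendsto
      (fun x₁ : ℝ => ∫ s in (0 : ℝ)..1,
        ∑ i, lam i / ((x₁ ^ 2 + s ^ 2) ^ (α i) * x₁))
      (nhdsWithin 0 (Set.Ioi 0)) (nhds L)) :
    ∀ i, lam i = 0 := by
  obtain ⟨L, hL⟩ := h
  have hΘ i := kernelIntegral_isTheta (hα i)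
  refine eq_zero_of_sum_isBigO_one (l := 𝓝[>] 0) (f := fun i => kernelIntegral (α i))
    (fun i j hij => ?_) (fun i => ?_) ?_
  · exact (hΘ i).isBigO.trans_isLittleO ((isLittleO_rpow_rpow_nhdsGT_zero
      (by linarith [hmono hij])).trans_isBigO (hΘ j).symm.isBigO)
  · simpa using (isLittleO_rpow_rpow_nhdsGT_zero (b := 0)
      (by linarith [hα i])).trans_isBigO (hΘ i).symm.isBigO
  · refine (hL.isBigO_one ℝ).congr' ?_ EventuallyEq.rfl
    filter_upwards [self_mem_nhdsWithin] with x hx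
    exact integral_sum_div_eq_sum_mul_kernelIntegral lam α (ne_of_gt hx)
end

section
/- Let a : ℝ²\{0} → ℝ be smooth and suppose there is a smooth g : ℝ²\{0} → ℝ with x₂ ∂₂g − x₃ ∂₃g = a. Let A = a∘φ where φ is the diffeomorphism with inverse (x₂,x₃) ↦ (x₂x₃, (x₂²−x₃²)/2) on the first quadrant. Then the limit as u → 0⁺ of ∫₋₁¹ A(u,t)/(2√(u²+t²)) dt exists. -/
/-- The change of variables for the Lie algebra `h` (`[X₁,X₂]=X₂`,
`[X₁,X₃]=−X₃`): the map `φ(u,v)` inverse to `(x₂,x₃) ↦ (x₂x₃, (x₂²−x₃²)/2)`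
on the open first quadrant. -/
noncomputable def phi (p : ℝ × ℝ) : ℝ × ℝ :=
  if 0 < p.2 then
    (Real.sqrt (p.2 + Real.sqrt (p.1 ^ 2 + p.2 ^ 2)),
     p.1 / Real.sqrt (p.2 + Real.sqrt (p.1 ^ 2 + p.2 ^ 2)))
  else if p.2 < 0 then
    (p.1 / Real.sqrt (-p.2 + Real.sqrt (p.1 ^ 2 + p.2 ^ 2)),
     Real.sqrt (-p.2 + Real.sqrt (p.1 ^ 2 + p.2 ^ 2)))
  else (Real.sqrt p.1, Real.sqrt p.1)


noncomputable def psi (u v : ℝ) : ℝ × ℝ :=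
  (Real.sqrt (Real.sqrt (u ^ 2 + v ^ 2) + v), Real.sqrt (Real.sqrt (u ^ 2 + v ^ 2) - v))

lemma abs_lt_r {u v : ℝ} (hu : 0 < u) : |v| < Real.sqrt (u ^ 2 + v ^ 2) := by
  have : |v| = Real.sqrt (v ^ 2) := by rw [Real.sqrt_sq_eq_abs]
  rw [this]
  apply Real.sqrt_lt_sqrt (by positivity)
  nlinarith

lemma phi_eq {u v : ℝ} (hu : 0 < u) : phi (u, v) = psi u v := by
  have hr := abs_lt_r (v := v) hu
  have h1 : 0 < Real.sqrt (u ^ 2 + v ^ 2) + v := by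
    have := neg_lt_of_abs_lt hr; linarith
  have h2 : 0 < Real.sqrt (u ^ 2 + v ^ 2) - v := by
    have := lt_of_abs_lt hr; linarith
  have hrsq : Real.sqrt (u ^ 2 + v ^ 2) ^ 2 = u ^ 2 + v ^ 2 := Real.sq_sqrt (by positivity)
  have key : Real.sqrt (Real.sqrt (u ^ 2 + v ^ 2) + v)
      * Real.sqrt (Real.sqrt (u ^ 2 + v ^ 2) - v) = u := by
    rw [← Real.sqrt_mul h1.le]
    have : (Real.sqrt (u ^ 2 + v ^ 2) + v) * (Real.sqrt (u ^ 2 + v ^ 2) - v) = u ^ 2 := by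
      nlinarith [hrsq]
    rw [this, Real.sqrt_sq hu.le]
  have hs1 : (0:ℝ) < Real.sqrt (Real.sqrt (u ^ 2 + v ^ 2) + v) := Real.sqrt_pos.mpr h1
  have hs2 : (0:ℝ) < Real.sqrt (Real.sqrt (u ^ 2 + v ^ 2) - v) := Real.sqrt_pos.mpr h2
  unfold phi psi
  rcases lt_trichotomy v 0 with hv | hv | hv
  · rw [if_neg (by simp only; linarith), if_pos (by simpa using hv)]
    simp only
    have hcomm : -v + Real.sqrt (u ^ 2 + v ^ 2) = Real.sqrt (u ^ 2 + v ^ 2) - v := by ring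
    rw [hcomm]
    refine Prod.ext ?_ rfl
    simp only
    rw [div_eq_iff hs2.ne', key]
  · subst hv
    rw [if_neg (by simp), if_neg (by simp)]
    simp [Real.sqrt_sq hu.le]
  · rw [if_pos (by simpa using hv)]
    simp only
    have hcomm : v + Real.sqrt (u ^ 2 + v ^ 2) = Real.sqrt (u ^ 2 + v ^ 2) + v := by ring
    rw [hcomm]
    refine Prod.ext rfl ?_
    simp only
    rw [div_eq_iff hs1.ne']
    rw [mul_comm] at key
    exact key.symm

lemma hasDerivAt_r {u v : ℝ} (hu : 0 < u) :
    HasDerivAt (fun t : ℝ => Real.sqrt (u ^ 2 + t ^ 2))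
      (v / Real.sqrt (u ^ 2 + v ^ 2)) v := by
  have h1 : HasDerivAt (fun t : ℝ => u ^ 2 + t ^ 2) (2 * v) v := by
    simpa using ((hasDerivAt_pow 2 v).const_add (u ^ 2))
  have h2 : HasDerivAt (fun t : ℝ => Real.sqrt (u ^ 2 + t ^ 2))
      (1 / (2 * Real.sqrt (u ^ 2 + v ^ 2)) * (2 * v)) v :=
    (Real.hasDerivAt_sqrt (by positivity : u ^ 2 + v ^ 2 ≠ 0)).comp v h1
  convert h2 using 1
  have hr : Real.sqrt (u ^ 2 + v ^ 2) ≠ 0 := by positivity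
  field_simp

lemma hasDerivAt_psi1 {u v : ℝ} (hu : 0 < u) :
    HasDerivAt (fun t : ℝ => Real.sqrt (Real.sqrt (u ^ 2 + t ^ 2) + t))
      (Real.sqrt (Real.sqrt (u ^ 2 + v ^ 2) + v) / (2 * Real.sqrt (u ^ 2 + v ^ 2))) v := by
  have hr := abs_lt_r (v := v) hu
  have h1 : 0 < Real.sqrt (u ^ 2 + v ^ 2) + v := by
    have := neg_lt_of_abs_lt hr; linarith
  have hrpos : (0:ℝ) < Real.sqrt (u ^ 2 + v ^ 2) := by positivity
  have hinner : HasDerivAt (fun t : ℝ => Real.sqrt (u ^ 2 + t ^ 2) + t)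
      (v / Real.sqrt (u ^ 2 + v ^ 2) + 1) v := (hasDerivAt_r hu).add (hasDerivAt_id v)
  have h2 := hinner.sqrt (by simpa using h1.ne')
  convert h2 using 1
  have hs : (0:ℝ) < Real.sqrt (Real.sqrt (u ^ 2 + v ^ 2) + v) := Real.sqrt_pos.mpr h1
  have hsq : Real.sqrt (Real.sqrt (u ^ 2 + v ^ 2) + v) ^ 2
      = Real.sqrt (u ^ 2 + v ^ 2) + v := Real.sq_sqrt h1.le
  field_simp
  nlinarith [hsq]

lemma hasDerivAt_psi2 {u v : ℝ} (hu : 0 < u) :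
    HasDerivAt (fun t : ℝ => Real.sqrt (Real.sqrt (u ^ 2 + t ^ 2) - t))
      (-(Real.sqrt (Real.sqrt (u ^ 2 + v ^ 2) - v) / (2 * Real.sqrt (u ^ 2 + v ^ 2)))) v := by
  have hr := abs_lt_r (v := v) hu
  have h2' : 0 < Real.sqrt (u ^ 2 + v ^ 2) - v := by
    have := lt_of_abs_lt hr; linarith
  have hrpos : (0:ℝ) < Real.sqrt (u ^ 2 + v ^ 2) := by positivity
  have hinner : HasDerivAt (fun t : ℝ => Real.sqrt (u ^ 2 + t ^ 2) - t)
      (v / Real.sqrt (u ^ 2 + v ^ 2) - 1) v := (hasDerivAt_r hu).sub (hasDerivAt_id v)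
  have h2 := hinner.sqrt (by simpa using h2'.ne')
  convert h2 using 1
  have hs : (0:ℝ) < Real.sqrt (Real.sqrt (u ^ 2 + v ^ 2) - v) := Real.sqrt_pos.mpr h2'
  have hsq : Real.sqrt (Real.sqrt (u ^ 2 + v ^ 2) - v) ^ 2
      = Real.sqrt (u ^ 2 + v ^ 2) - v := Real.sq_sqrt h2'.le
  field_simp
  nlinarith [hsq]

lemma continuous_psi_snd (v : ℝ) : Continuous (fun u : ℝ => psi u v) := by
  unfold psi; fun_prop

lemma continuous_psi_fst (u : ℝ) : Continuous (fun v : ℝ => psi u v) := by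
  unfold psi; fun_prop

lemma psi_ne_zero {u v : ℝ} (h : u ≠ 0 ∨ v ≠ 0) : psi u v ≠ 0 := by
  have hpos : (0:ℝ) < u ^ 2 + v ^ 2 := by
    rcases h with h | h <;> positivity
  have habs : |v| ≤ Real.sqrt (u ^ 2 + v ^ 2) := by
    rw [← Real.sqrt_sq_eq_abs]
    apply Real.sqrt_le_sqrt; nlinarith
  intro hz
  have h1 : Real.sqrt (Real.sqrt (u ^ 2 + v ^ 2) + v) = 0 := congrArg Prod.fst hz
  have h2 : Real.sqrt (Real.sqrt (u ^ 2 + v ^ 2) - v) = 0 := congrArg Prod.snd hz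
  have e1 : Real.sqrt (u ^ 2 + v ^ 2) + v ≤ 0 := by
    by_contra hc
    exact (Real.sqrt_pos.mpr (lt_of_not_ge hc)).ne' h1
  have e2 : Real.sqrt (u ^ 2 + v ^ 2) - v ≤ 0 := by
    by_contra hc
    exact (Real.sqrt_pos.mpr (lt_of_not_ge hc)).ne' h2
  have : Real.sqrt (u ^ 2 + v ^ 2) ≤ 0 := by linarith
  exact absurd (Real.sqrt_pos.mpr hpos) (not_lt.mpr this)


set_option maxHeartbeats 1000000 in
/-- Let `a : ℝ²\{0} → ℝ` be smooth and suppose there is a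
smooth `g : ℝ²\{0} → ℝ` with `x₂ ∂₂ g − x₃ ∂₃ g = a`.  With `A = a ∘ φ`, the
limit as `u → 0⁺` of `∫_{-1}^{1} A(u,t)/(2√(u²+t²)) dt` exists. -/
theorem h_lemma (a g : ℝ × ℝ → ℝ)
    (ha : ContDiffOn ℝ (⊤ : ℕ∞) a {x | x ≠ 0}) (hg : ContDiffOn ℝ (⊤ : ℕ∞) g {x | x ≠ 0})
    (hpde : ∀ x : ℝ × ℝ, x ≠ 0 →
      x.1 * fderiv ℝ g x (1, 0) - x.2 * fderiv ℝ g x (0, 1) = a x) :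
    ∃ L : ℝ, Filter.Tendsto
      (fun u : ℝ => ∫ t in (-1 : ℝ)..1,
        a (phi (u, t)) / (2 * Real.sqrt (u ^ 2 + t ^ 2)))
      (nhdsWithin 0 (Set.Ioi 0)) (nhds L) := by
  have hopen : IsOpen {x : ℝ × ℝ | x ≠ 0} := isOpen_ne
  -- key derivative
  have key : ∀ u : ℝ, 0 < u → ∀ v : ℝ,
      HasDerivAt (fun t => g (psi u t))
        (a (psi u v) / (2 * Real.sqrt (u ^ 2 + v ^ 2))) v := by
    intro u hu v
    have hne : psi u v ≠ 0 := psi_ne_zero (Or.inl hu.ne')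
    have hgd : DifferentiableAt ℝ g (psi u v) :=
      ((hg.contDiffAt (hopen.mem_nhds hne)).differentiableAt (by simp))
    have hψ : HasDerivAt (fun t => psi u t)
        ((Real.sqrt (Real.sqrt (u ^ 2 + v ^ 2) + v) / (2 * Real.sqrt (u ^ 2 + v ^ 2)),
          -(Real.sqrt (Real.sqrt (u ^ 2 + v ^ 2) - v) / (2 * Real.sqrt (u ^ 2 + v ^ 2))))) v :=
      (hasDerivAt_psi1 hu).prodMk (hasDerivAt_psi2 hu)
    have hcomp : HasDerivAt (fun t => g (psi u t)) (fderiv ℝ g (psi u v)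
        ((Real.sqrt (Real.sqrt (u ^ 2 + v ^ 2) + v) / (2 * Real.sqrt (u ^ 2 + v ^ 2)),
          -(Real.sqrt (Real.sqrt (u ^ 2 + v ^ 2) - v) / (2 * Real.sqrt (u ^ 2 + v ^ 2)))))) v :=
      hgd.hasFDerivAt.comp_hasDerivAt v hψ
    convert hcomp using 1
    set r := Real.sqrt (u ^ 2 + v ^ 2) with hr
    set s1 := Real.sqrt (r + v) with hs1
    set s2 := Real.sqrt (r - v) with hs2
    have hrpos : (0:ℝ) < r := by rw [hr]; positivity
    have hvec : ((s1 / (2 * r), -(s2 / (2 * r))) : ℝ × ℝ)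
        = (2 * r)⁻¹ • (s1 • ((1, 0) : ℝ × ℝ) + (-s2) • ((0, 1) : ℝ × ℝ)) := by
      refine Prod.ext ?_ ?_ <;> simp <;> ring
    rw [hvec, map_smul, map_add, map_smul, map_smul]
    have hx1 : (psi u v).1 = s1 := rfl
    have hx2 : (psi u v).2 = s2 := rfl
    have := hpde (psi u v) hne
    rw [hx1, hx2] at this
    simp only [smul_eq_mul]
    rw [show s1 * fderiv ℝ g (psi u v) (1, 0) + -s2 * fderiv ℝ g (psi u v) (0, 1)
        = s1 * fderiv ℝ g (psi u v) (1, 0) - s2 * fderiv ℝ g (psi u v) (0, 1) by ring, this]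
    field_simp
  -- FTC
  have ftc : ∀ u : ℝ, 0 < u →
      (∫ t in (-1 : ℝ)..1, a (phi (u, t)) / (2 * Real.sqrt (u ^ 2 + t ^ 2)))
        = g (psi u 1) - g (psi u (-1)) := by
    intro u hu
    have hcongr : (fun t : ℝ => a (phi (u, t)) / (2 * Real.sqrt (u ^ 2 + t ^ 2)))
        = fun t : ℝ => a (psi u t) / (2 * Real.sqrt (u ^ 2 + t ^ 2)) := by
      funext t; rw [phi_eq hu]
    rw [hcongr]
    have hint : IntervalIntegrable
        (fun t : ℝ => a (psi u t) / (2 * Real.sqrt (u ^ 2 + t ^ 2))) MeasureTheory.volume (-1) 1 := by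
      apply ContinuousOn.intervalIntegrable
      apply ContinuousOn.div
      · exact (ha.continuousOn.comp (continuous_psi_fst u).continuousOn
          (fun t _ => psi_ne_zero (Or.inl hu.ne')))
      · fun_prop
      · intro t _; positivity
    exact intervalIntegral.integral_eq_sub_of_hasDerivAt (fun t _ => key u hu t) hint
  -- limit
  refine ⟨g (psi 0 1) - g (psi 0 (-1)), ?_⟩
  have hc1 : ContinuousAt g (psi 0 1) :=
    (hg.contDiffAt (hopen.mem_nhds (psi_ne_zero (Or.inr one_ne_zero)))).continuousAt
  have hc2 : ContinuousAt g (psi 0 (-1)) :=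
    (hg.contDiffAt (hopen.mem_nhds (psi_ne_zero (Or.inr (by norm_num))))).continuousAt
  have t1 : Filter.Tendsto (fun u : ℝ => g (psi u 1)) (nhds 0) (nhds (g (psi 0 1))) :=
    Filter.Tendsto.comp hc1 ((continuous_psi_snd 1).tendsto 0)
  have t2 : Filter.Tendsto (fun u : ℝ => g (psi u (-1))) (nhds 0) (nhds (g (psi 0 (-1)))) :=
    Filter.Tendsto.comp hc2 ((continuous_psi_snd (-1)).tendsto 0)
  have := ((t1.sub t2).mono_left (nhdsWithin_le_nhds (s := Set.Ioi (0:ℝ))))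
  apply Filter.Tendsto.congr' _ this
  filter_upwards [self_mem_nhdsWithin] with u hu
  exact (ftc u hu).symm
end

section
/- If α₁ < ... < α_p are positive reals and λ₁,...,λ_p reals such that Σᵢ λᵢ ∫₀¹ 2·exp(αᵢ/(x₁²+s²))/(x₁²+s²)² ds has a finite limit as x₁ → 0⁺, then all λᵢ = 0; moreover this remains true when each λᵢ is replaced by P_i(z₁(x)) for polynomials P_i evaluated at invariants (i.e., the classes are independent over the ring of invariant polynomials). -/
/-!
Divide by `exp (αᵢ / x²)` for the largest `i` with `λᵢ ≠ 0`. The integral for `α` lies between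
`(exp (α / x²) - exp (α / (x² + 1))) / α` and `2 exp (α / x²) / x⁴`, so after this division the
`i`-th term stays bounded away from `0`, every term with `αⱼ < αᵢ` is `O(x⁻⁴ exp (-(αᵢ - αⱼ) / x²))`,
and the convergent sum itself tends to `0`; hence `λᵢ = 0`.
-/

open Real Filter Topology

theorem eq_zero_of_tendsto_sum_of_dominant {ι X : Type*} [Fintype ι] [LinearOrder ι]
    {l : Filter X} {f g : ι → X → ℝ} (hg : ∀ i, Tendsto (g i) l atTop)
    (hlt : ∀ i j, j < i → Tendsto (fun x => f j x / g i x) l (𝓝 0))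
    (hself : ∀ i, ¬ Tendsto (fun x => f i x / g i x) l (𝓝 0))
    {lam : ι → ℝ} {L : ℝ} (h : Tendsto (fun x => ∑ j, lam j * f j x) l (𝓝 L)) :
    lam = 0 := by
  classical
  by_contra hne
  have hsupp : (Finset.univ.filter fun j => lam j ≠ 0).Nonempty := by
    obtain ⟨j, hj⟩ := Function.ne_iff.mp hne
    exact ⟨j, by simpa using hj⟩
  set i := (Finset.univ.filter fun j => lam j ≠ 0).max' hsupp
  have hi : lam i ≠ 0 := by simpa using Finset.max'_mem _ hsupp
  have hvanish : ∀ j, i < j → lam j = 0 := fun j hij => by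
    by_contra hj
    exact (Finset.le_max' _ j (by simpa using hj)).not_gt hij
  have hsum : Tendsto (fun x => ∑ j, lam j * (f j x / g i x)) l (𝓝 0) := by
    simpa [mul_div_assoc, Finset.sum_div] using h.div_atTop (hg i)
  have hrest : Tendsto (fun x => ∑ j ∈ Finset.univ.erase i, lam j * (f j x / g i x)) l (𝓝 0) := by
    rw [← Finset.sum_const_zero (s := Finset.univ.erase i)]
    refine tendsto_finsetSum _ fun j hj => ?_
    rcases lt_or_gt_of_ne (Finset.ne_of_mem_erase hj) with hji | hij
    · simpa using (hlt i j hji).const_mul (lam j)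
    · simp [hvanish j hij, tendsto_const_nhds]
  have htop : Tendsto (fun x => lam i * (f i x / g i x)) l (𝓝 0) := by
    refine (sub_zero (0 : ℝ) ▸ hsum.sub hrest).congr fun x => ?_
    rw [← Finset.add_sum_erase _ _ (Finset.mem_univ i), add_sub_cancel_right]
  exact hself i (by simpa [hi] using htop.const_mul (lam i)⁻¹)

noncomputable def expClass (α x : ℝ) : ℝ :=
  ∫ s in (0 : ℝ)..1, 2 * exp (α / (x ^ 2 + s ^ 2)) / (x ^ 2 + s ^ 2) ^ 2

section ExpClass

variable {α x : ℝ}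

theorem continuous_expClass_integrand (hx : x ≠ 0) :
    Continuous fun s : ℝ => 2 * exp (α / (x ^ 2 + s ^ 2)) / (x ^ 2 + s ^ 2) ^ 2 := by
  have : ∀ s : ℝ, x ^ 2 + s ^ 2 ≠ 0 := fun s => by positivity
  fun_prop (disch := simp [this])

theorem expClass_nonneg (α x : ℝ) : 0 ≤ expClass α x :=
  intervalIntegral.integral_nonneg zero_le_one fun s _ => by positivity

theorem expClass_le (hα : 0 ≤ α) (hx : x ≠ 0) :
    expClass α x ≤ 2 * exp (α / x ^ 2) / x ^ 4 := by
  calc expClass α x ≤ ∫ _ in (0 : ℝ)..1, 2 * exp (α / x ^ 2) / x ^ 4 := by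
        refine intervalIntegral.integral_mono_on zero_le_one
          ((continuous_expClass_integrand hx).intervalIntegrable 0 1) intervalIntegrable_const
          fun s _ => ?_
        rw [show x ^ 4 = (x ^ 2) ^ 2 by ring]
        gcongr <;> exact le_add_of_nonneg_right (by positivity)
    _ = 2 * exp (α / x ^ 2) / x ^ 4 := by simp

theorem le_expClass (hα : 0 < α) (hx : x ≠ 0) :
    (exp (α / x ^ 2) - exp (α / (x ^ 2 + 1))) / α ≤ expClass α x := by
  have hpos : ∀ s : ℝ, x ^ 2 + s ^ 2 ≠ 0 := fun s => by positivity
  -- On `[0, 1]` the integrand dominates `s` times itself, which has the explicit antiderivative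
  -- `s ↦ -exp (α / (x² + s²)) / α`.
  have hderiv : ∀ s ∈ Set.uIcc (0 : ℝ) 1, HasDerivAt (fun s : ℝ => -exp (α / (x ^ 2 + s ^ 2)) / α)
      (s * (2 * exp (α / (x ^ 2 + s ^ 2)) / (x ^ 2 + s ^ 2) ^ 2)) s := by
    intro s _
    have hsq : HasDerivAt (fun s : ℝ => x ^ 2 + s ^ 2) (2 * s) s := by
      simpa using (hasDerivAt_pow 2 s).const_add (x ^ 2)
    refine (((hasDerivAt_const s α).div hsq (hpos s)).exp.neg.div_const α).congr_deriv ?_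
    simp only [Pi.div_apply]
    field_simp
    ring
  have hcont := continuous_expClass_integrand (α := α) hx
  calc (exp (α / x ^ 2) - exp (α / (x ^ 2 + 1))) / α
      = ∫ s in (0 : ℝ)..1, s * (2 * exp (α / (x ^ 2 + s ^ 2)) / (x ^ 2 + s ^ 2) ^ 2) := by
        rw [intervalIntegral.integral_eq_sub_of_hasDerivAt hderiv
          ((continuous_id.mul hcont).intervalIntegrable 0 1), one_pow, zero_pow two_ne_zero, add_zero]
        ring
    _ ≤ expClass α x := by
        refine intervalIntegral.integral_mono_on zero_le_one
          ((continuous_id.mul hcont).intervalIntegrable 0 1) (hcont.intervalIntegrable 0 1)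
          fun s hs => ?_
        exact mul_le_of_le_one_left (by positivity) hs.2

theorem tendsto_inv_sq_nhdsGT_zero : Tendsto (fun x : ℝ => (x ^ 2)⁻¹) (𝓝[>] 0) atTop :=
  ((tendsto_pow_atTop two_ne_zero).comp tendsto_inv_nhdsGT_zero).congr fun x => by simp

theorem tendsto_exp_div_sq_nhdsGT_zero (hα : 0 < α) :
    Tendsto (fun x : ℝ => exp (α / x ^ 2)) (𝓝[>] 0) atTop :=
  tendsto_exp_atTop.comp (tendsto_inv_sq_nhdsGT_zero.const_mul_atTop hα)

theorem tendsto_expClass_div_exp {β : ℝ} (hβ : 0 ≤ β) (hβα : β < α) :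
    Tendsto (fun x => expClass β x / exp (α / x ^ 2)) (𝓝[>] 0) (𝓝 0) := by
  have hlim : Tendsto (fun x : ℝ => 2 * ((x ^ 2)⁻¹ ^ (2 : ℝ) * exp (-(α - β) * (x ^ 2)⁻¹)))
      (𝓝[>] 0) (𝓝 0) := by
    simpa using ((tendsto_rpow_mul_exp_neg_mul_atTop_nhds_zero 2 (α - β)
      (sub_pos.2 hβα)).comp tendsto_inv_sq_nhdsGT_zero).const_mul 2
  refine squeeze_zero' (.of_forall fun x => div_nonneg (expClass_nonneg β x) (exp_pos _).le) ?_ hlim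
  filter_upwards [self_mem_nhdsWithin] with x (hx : 0 < x)
  calc expClass β x / exp (α / x ^ 2) ≤ 2 * exp (β / x ^ 2) / x ^ 4 / exp (α / x ^ 2) := by
        gcongr
        exact expClass_le hβ hx.ne'
    _ = 2 * ((x ^ 2)⁻¹ ^ (2 : ℝ) * exp (-(α - β) * (x ^ 2)⁻¹)) := by
        rw [rpow_two, show -(α - β) * (x ^ 2)⁻¹ = β / x ^ 2 - α / x ^ 2 by ring, exp_sub]
        field_simp

theorem not_tendsto_expClass_div_exp (hα : 0 < α) :
    ¬ Tendsto (fun x => expClass α x / exp (α / x ^ 2)) (𝓝[>] 0) (𝓝 0) := by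
  intro h
  have hlow : Tendsto (fun x : ℝ => (1 - exp (α / (x ^ 2 + 1)) / exp (α / x ^ 2)) / α)
      (𝓝[>] 0) (𝓝 (1 / α)) := by
    have hnum : Tendsto (fun x : ℝ => exp (α / (x ^ 2 + 1))) (𝓝[>] 0) (𝓝 (exp α)) := by
      have hcont : Continuous fun x : ℝ => exp (α / (x ^ 2 + 1)) :=
        continuous_exp.comp (continuous_const.div (by fun_prop) fun x => by positivity)
      simpa using hcont.tendsto' 0 _ rfl |>.mono_left nhdsWithin_le_nhds
    simpa using ((hnum.div_atTop (tendsto_exp_div_sq_nhdsGT_zero hα)).const_sub 1).div_const α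
  have : 1 / α ≤ 0 := le_of_tendsto_of_tendsto hlow h <| by
    filter_upwards [self_mem_nhdsWithin] with x (hx : 0 < x)
    calc (1 - exp (α / (x ^ 2 + 1)) / exp (α / x ^ 2)) / α
        = (exp (α / x ^ 2) - exp (α / (x ^ 2 + 1))) / α / exp (α / x ^ 2) := by
          field_simp
      _ ≤ expClass α x / exp (α / x ^ 2) := by
          gcongr
          exact le_expClass hα hx.ne'
  exact (one_div_pos.2 hα).not_ge this

end ExpClass

/-- If `α₁ < … < α_p` are positive reals and `λ₁,…,λ_p` reals
such that `Σᵢ λᵢ ∫₀¹ 2 e^{αᵢ/(x₁²+s²)}/(x₁²+s²)² ds` has a finite limit as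
`x₁ → 0⁺`, then all `λᵢ = 0`. -/
theorem exp_classes_linearly_independent (p : ℕ) (α : Fin p → ℝ)
    (hmono : StrictMono α) (hα : ∀ i, 0 < α i) (lam : Fin p → ℝ)
    (h : ∃ L : ℝ, Filter.Tendsto
      (fun x₁ : ℝ => ∑ i, lam i *
        ∫ s in (0 : ℝ)..1,
          2 * Real.exp (α i / (x₁ ^ 2 + s ^ 2)) / (x₁ ^ 2 + s ^ 2) ^ 2)
      (nhdsWithin 0 (Set.Ioi 0)) (nhds L)) :
    ∀ i, lam i = 0 := by
  obtain ⟨L, hL⟩ := h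
  exact congrFun <| eq_zero_of_tendsto_sum_of_dominant (f := fun i => expClass (α i))
    (g := fun i x => exp (α i / x ^ 2)) (fun i => tendsto_exp_div_sq_nhdsGT_zero (hα i))
    (fun i j hji => tendsto_expClass_div_exp (hα j).le (hmono hji))
    (fun i => not_tendsto_expClass_div_exp (hα i)) hL
end
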